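/- Let η > 0 be fixed and define J(σ) := σ·(1/2 - (η/σ)·φ(η/σ)/(2Φ(η/σ) - 1)) for σ > 0 and J(0) := 0. Then J(σ) > 0 for all σ > 0, J is continuous on (0, ∞), and for any 0 < σ₁ < σ₂, min_{σ ∈ [σ₁, σ₂]} J(σ) ≥ σ₁·(1/2 - (η/σ₂)·φ(η/σ₂)/(2Φ(η/σ₂) - 1)) > 0. -/

import Mathlib

noncomputable def stdPhi (x : ℝ) : ℝ := (Real.sqrt (2 * Real.pi))⁻¹ * Real.exp (-x ^ 2 / 2)

noncomputable def stdCDF (x : ℝ) : ℝ := ∫ t in Set.Iic x, stdPhi t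

noncomputable def Jfun (η σ : ℝ) : ℝ :=
  if σ = 0 then 0
  else σ * (1 / 2 - (η / σ) * stdPhi (η / σ) / (2 * stdCDF (η / σ) - 1))

open MeasureTheory Set

lemma stdPhi_pos (x : ℝ) : 0 < stdPhi x := by
  have h : 0 < Real.sqrt (2 * Real.pi) := Real.sqrt_pos.2 (by positivity)
  exact mul_pos (inv_pos.2 h) (Real.exp_pos _)

lemma continuous_stdPhi : Continuous stdPhi := by
  unfold stdPhi
  fun_prop

lemma hasDerivAt_stdPhi (x : ℝ) : HasDerivAt stdPhi (-x * stdPhi x) x := by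
  have h1 : HasDerivAt (fun y : ℝ => -y ^ 2 / 2) (-x) x := by
    have := ((hasDerivAt_pow 2 x).neg).div_const 2
    refine this.congr_deriv ?_; push_cast; ring
  have h2 := (h1.exp).const_mul (Real.sqrt (2 * Real.pi))⁻¹
  refine h2.congr_deriv ?_
  unfold stdPhi; ring

lemma integrable_stdPhi : Integrable stdPhi := by
  have h : Integrable (fun x : ℝ => Real.exp (-(1/2) * x ^ 2)) := integrable_exp_neg_mul_sq (by norm_num)
  have := h.const_mul (Real.sqrt (2 * Real.pi))⁻¹
  refine this.congr ?_
  filter_upwards with x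
  unfold stdPhi; ring_nf

lemma integral_stdPhi : ∫ x, stdPhi x = 1 := by
  have h : ∫ x : ℝ, Real.exp (-(1/2) * x ^ 2) = Real.sqrt (Real.pi / (1/2)) :=
    integral_gaussian (1/2)
  have hsq : Real.sqrt (Real.pi / (1/2)) = Real.sqrt (2 * Real.pi) := by norm_num; ring_nf
  have : ∫ x, stdPhi x = (Real.sqrt (2 * Real.pi))⁻¹ * ∫ x : ℝ, Real.exp (-(1/2) * x ^ 2) := by
    rw [← integral_const_mul]
    congr 1; funext x; unfold stdPhi; ring_nf
  rw [this, h, hsq, inv_mul_cancel₀]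
  exact ne_of_gt (Real.sqrt_pos.2 (by positivity))

lemma stdCDF_zero : stdCDF 0 = 1 / 2 := by
  have hsymm : ∫ t in Iic (0:ℝ), stdPhi t = ∫ t in Ioi (0:ℝ), stdPhi t := by
    have h0 := integral_comp_neg_Iic (0:ℝ) stdPhi
    rw [neg_zero] at h0
    rw [← h0]; congr 1; funext t; unfold stdPhi; ring_nf
  have hadd : (∫ t in Iic (0:ℝ), stdPhi t) + ∫ t in Ioi (0:ℝ), stdPhi t = ∫ t, stdPhi t :=
    intervalIntegral.integral_Iic_add_Ioi integrable_stdPhi.integrableOn integrable_stdPhi.integrableOn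
  have := integral_stdPhi
  unfold stdCDF
  linarith [hsymm, hadd]

lemma stdCDF_eq (x : ℝ) : stdCDF x = 1 / 2 + ∫ t in (0:ℝ)..x, stdPhi t := by
  have := intervalIntegral.integral_Iic_sub_Iic (f := stdPhi) (μ := volume)
    integrable_stdPhi.integrableOn integrable_stdPhi.integrableOn (a := 0) (b := x)
  unfold stdCDF at *
  rw [← this, stdCDF_zero.symm]
  unfold stdCDF
  ring

noncomputable def Sfun (x : ℝ) : ℝ := ∫ t in (0:ℝ)..x, stdPhi t

lemma intInt (a b : ℝ) : IntervalIntegrable stdPhi volume a b :=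
  continuous_stdPhi.intervalIntegrable a b

lemma Sfun_pos {x : ℝ} (hx : 0 < x) : 0 < Sfun x :=
  intervalIntegral.intervalIntegral_pos_of_pos_on (intInt 0 x)
    (fun t _ => stdPhi_pos t) hx

lemma stdPhi_lt {t x : ℝ} (ht : 0 ≤ t) (htx : t < x) : stdPhi x < stdPhi t := by
  have h2 : t ^ 2 < x ^ 2 := by nlinarith
  have : Real.exp (-x ^ 2 / 2) < Real.exp (-t ^ 2 / 2) := Real.exp_lt_exp.2 (by linarith)
  have hs : 0 < (Real.sqrt (2 * Real.pi))⁻¹ := inv_pos.2 (Real.sqrt_pos.2 (by positivity))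
  exact mul_lt_mul_of_pos_left this hs

lemma xphi_lt_S {x : ℝ} (hx : 0 < x) : x * stdPhi x < Sfun x := by
  have hpos : 0 < ∫ t in (0:ℝ)..x, (stdPhi t - stdPhi x) := by
    apply intervalIntegral.intervalIntegral_pos_of_pos_on
      ((intInt 0 x).sub (intervalIntegrable_const))
      (fun t ht => by have := stdPhi_lt ht.1.le ht.2; linarith) hx
  rw [intervalIntegral.integral_sub (intInt 0 x) intervalIntegrable_const,
    intervalIntegral.integral_const] at hpos
  simp only [sub_zero, smul_eq_mul] at hpos
  unfold Sfun
  linarith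

lemma ftc_xphi (x : ℝ) : ∫ t in (0:ℝ)..x, stdPhi t * (1 - t ^ 2) = x * stdPhi x := by
  have h : ∀ t ∈ Set.uIcc (0:ℝ) x, HasDerivAt (fun y => y * stdPhi y) (stdPhi t * (1 - t ^ 2)) t := by
    intro t _
    have := (hasDerivAt_id t).mul (hasDerivAt_stdPhi t)
    refine this.congr_deriv ?_; simp [id]; ring
  have hint : IntervalIntegrable (fun t => stdPhi t * (1 - t ^ 2)) volume 0 x :=
    (continuous_stdPhi.mul (by continuity)).intervalIntegrable 0 x
  have := intervalIntegral.integral_eq_sub_of_hasDerivAt h hint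
  rw [this]; simp

lemma key_ineq {x : ℝ} (hx : 0 < x) : (1 - x ^ 2) * Sfun x ≤ x * stdPhi x := by
  rw [← ftc_xphi x]
  have h1 : (1 - x ^ 2) * Sfun x = ∫ t in (0:ℝ)..x, stdPhi t * (1 - x ^ 2) := by
    rw [intervalIntegral.integral_mul_const]; unfold Sfun; ring
  rw [h1]
  apply intervalIntegral.integral_mono_on hx.le
    ((continuous_stdPhi.mul continuous_const).intervalIntegrable 0 x)
    ((continuous_stdPhi.mul (by continuity)).intervalIntegrable 0 x)
  intro t ht
  have h2 : t ^ 2 ≤ x ^ 2 := by nlinarith [ht.1, ht.2]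
  exact mul_le_mul_of_nonneg_left (by linarith) (stdPhi_pos t).le

noncomputable def Gfun (x : ℝ) : ℝ := x * stdPhi x / (2 * stdCDF x - 1)

lemma D_eq (x : ℝ) : 2 * stdCDF x - 1 = 2 * Sfun x := by
  rw [stdCDF_eq]; unfold Sfun; ring

lemma D_pos {x : ℝ} (hx : 0 < x) : 0 < 2 * stdCDF x - 1 := by
  rw [D_eq]; linarith [Sfun_pos hx]

lemma G_lt_half {x : ℝ} (hx : 0 < x) : Gfun x < 1 / 2 := by
  unfold Gfun
  rw [div_lt_iff₀ (D_pos hx), D_eq]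
  linarith [xphi_lt_S hx]

lemma hasDerivAt_stdCDF (x : ℝ) : HasDerivAt stdCDF (stdPhi x) x := by
  have heq : stdCDF = fun u => 1 / 2 + ∫ t in (0:ℝ)..u, stdPhi t := funext stdCDF_eq
  rw [heq]
  have := intervalIntegral.integral_hasDerivAt_right (intInt 0 x)
    (continuous_stdPhi.stronglyMeasurableAtFilter _ _) continuous_stdPhi.continuousAt
  exact this.const_add (1 / 2)

lemma hasDerivAt_G {x : ℝ} (hx : 0 < x) :
    HasDerivAt Gfun ((stdPhi x * (1 - x ^ 2) * (2 * stdCDF x - 1)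
      - x * stdPhi x * (2 * stdPhi x)) / (2 * stdCDF x - 1) ^ 2) x := by
  have hN : HasDerivAt (fun y => y * stdPhi y) (stdPhi x * (1 - x ^ 2)) x := by
    have := (hasDerivAt_id x).mul (hasDerivAt_stdPhi x)
    refine this.congr_deriv ?_; simp [id]; ring
  have hD : HasDerivAt (fun y => 2 * stdCDF y - 1) (2 * stdPhi x) x :=
    ((hasDerivAt_stdCDF x).const_mul 2).sub_const 1
  exact hN.div hD (ne_of_gt (D_pos hx))

lemma G_anti : AntitoneOn Gfun (Set.Ioi 0) := by
  apply antitoneOn_of_deriv_nonpos (convex_Ioi 0)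
  · exact fun x hx => (hasDerivAt_G hx).continuousAt.continuousWithinAt
  · rw [interior_Ioi]; exact fun x hx => (hasDerivAt_G hx).differentiableAt.differentiableWithinAt
  · rw [interior_Ioi]
    intro x hx
    rw [(hasDerivAt_G hx).deriv]
    apply div_nonpos_of_nonpos_of_nonneg _ (sq_nonneg _)
    rw [D_eq]
    nlinarith [key_ineq hx, stdPhi_pos x, Sfun_pos hx]

lemma Jfun_eq {η σ : ℝ} (hσ : 0 < σ) : Jfun η σ = σ * (1 / 2 - Gfun (η / σ)) := by
  rw [Jfun, if_neg (ne_of_gt hσ)]; rfl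

theorem Jfun_properties (η : ℝ) (hη : 0 < η) :
    (∀ σ : ℝ, 0 < σ → 0 < Jfun η σ) ∧
    ContinuousOn (Jfun η) (Set.Ioi 0) ∧
    (∀ σ₁ σ₂ : ℝ, 0 < σ₁ → σ₁ < σ₂ →
      (∀ σ ∈ Set.Icc σ₁ σ₂,
        Jfun η σ ≥ σ₁ * (1 / 2 - (η / σ₂) * stdPhi (η / σ₂) / (2 * stdCDF (η / σ₂) - 1))) ∧
      0 < σ₁ * (1 / 2 - (η / σ₂) * stdPhi (η / σ₂) / (2 * stdCDF (η / σ₂) - 1))) := by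
  have hGlt : ∀ {σ : ℝ}, 0 < σ → Gfun (η / σ) < 1 / 2 :=
    fun hσ => G_lt_half (div_pos hη hσ)
  refine ⟨fun σ hσ => ?_, ?_, fun σ₁ σ₂ h1 h12 => ?_⟩
  · rw [Jfun_eq hσ]
    have := hGlt hσ
    nlinarith
  · apply ContinuousOn.congr (f := fun σ => σ * (1 / 2 - Gfun (η / σ)))
    · intro σ hσ
      apply ContinuousWithinAt.mono (t := Set.Ioi 0) _ (le_refl _)
      apply ContinuousAt.continuousWithinAt
      have hσ' : (0:ℝ) < σ := hσ
      have hc : ContinuousAt (fun σ : ℝ => Gfun (η / σ)) σ := by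
        have h1 : ContinuousAt (fun σ : ℝ => η / σ) σ :=
          (continuousAt_const.div continuousAt_id (ne_of_gt hσ'))
        exact (hasDerivAt_G (div_pos hη hσ')).continuousAt.comp h1
      exact continuousAt_id.mul (continuousAt_const.sub hc)
    · intro σ hσ
      exact Jfun_eq hσ
  · have hx2 : (0:ℝ) < η / σ₂ := div_pos hη (h1.trans h12)
    have hB : 0 < 1 / 2 - Gfun (η / σ₂) := by linarith [G_lt_half hx2]
    constructor
    · intro σ hσ
      have hσ0 : 0 < σ := lt_of_lt_of_le h1 hσ.1
      rw [Jfun_eq hσ0]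
      have hGle : Gfun (η / σ) ≤ Gfun (η / σ₂) := by
        apply G_anti hx2 (div_pos hη hσ0)
        apply div_le_div_of_nonneg_left hη.le hσ0 hσ.2
      have : σ₁ * (1 / 2 - Gfun (η / σ₂)) ≤ σ * (1 / 2 - Gfun (η / σ)) :=
        mul_le_mul hσ.1 (by linarith) hB.le hσ0.le
      exact this
    · exact mul_pos h1 hB
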